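/- The total number of fixed points of all involutions of [n] equals n·t_{n−1}; hence the average number of fixed points of a uniformly random involution of [n] equals n·t_{n−1}/t_n, and this average is (1+o(1))·√n as n → ∞. -/

import Mathlib

/-!
Counting pairs `(φ, t)` with `φ t = t` the other way round gives `n · t_{n-1}`, because the
involutions fixing `t` are exactly the involutions of the other `n - 1` points. Sorting the
involutions of `[n + 2]` by the image of one point gives `t_{n+2} = t_{n+1} + (n + 1) t_n`
(an involution sending `a` to `b ≠ a` becomes, after multiplying by the transposition `(a b)`,
an involution fixing both). Hence `r_n = t_{n+1} / t_n` satisfies `r_{n+1} = 1 + (n + 1) / r_n`,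
a recursion that preserves `√(n + 1) ≤ r_n ≤ √(n + 1) + 1`; the average `n · t_{n-1} / t_n`
equals `n / r_{n-1}` and is therefore squeezed between `n / (√n + 1)` and `√n`.
-/

open Filter

/-- `t_n`, the number of involutions of `[n]` (with `t_0 = 1`). -/
noncomputable def tInv (n : ℕ) : ℕ := Nat.card {φ : Equiv.Perm (Fin n) // φ * φ = 1}

open Equiv Equiv.Perm Finset Topology

lemma MulEquiv.card_mul_self_eq_one_congr {M N : Type*} [Monoid M] [Monoid N] (e : M ≃* N) :
    Nat.card {x : M // x * x = 1} = Nat.card {y : N // y * y = 1} :=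
  Nat.card_congr <| e.toEquiv.subtypeEquiv fun x => by
    rw [MulEquiv.toEquiv_eq_coe, coe_toEquiv, ← map_mul, e.map_eq_one_iff]

section Involutions

variable {α : Type*}

lemma card_involutions_eq_tInv [Fintype α] :
    Nat.card {φ : Perm α // φ * φ = 1} = tInv (Fintype.card α) :=
  (Fintype.equivFin α).permCongrHom.card_mul_self_eq_one_congr

def subtypeInvolutionsEquiv (p : α → Prop) [DecidablePred p] :
    {ψ : Perm (Subtype p) // ψ * ψ = 1} ≃
      {φ : Perm α // (∀ x, ¬p x → φ x = x) ∧ φ * φ = 1} :=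
  ((Perm.subtypeEquivSubtypePerm p).subtypeEquiv fun ψ => by
      rw [subtypeEquivSubtypePerm_apply_coe, ← map_mul, map_eq_one_iff _ ofSubtype_injective]).trans
    (subtypeSubtypeEquivSubtypeInter _ fun φ => φ * φ = 1)

lemma card_involutions_eq_sum [Fintype α] (a : α) :
    Nat.card {φ : Perm α // φ * φ = 1} = ∑ b, Nat.card {φ : Perm α // φ * φ = 1 ∧ φ a = b} := by
  rw [← Nat.card_congr (sigmaFiberEquiv fun φ : {φ : Perm α // φ * φ = 1} => φ.1 a),
    Nat.card_sigma]
  exact Fintype.sum_congr _ _ fun b =>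
    Nat.card_congr (subtypeSubtypeEquivSubtypeInter (fun φ => φ * φ = 1) (fun φ : Perm α => φ a = b))

variable [DecidableEq α]

lemma mul_swap_mul_self_of_apply_eq {φ : Perm α} {a b : α} (hab : φ a = b) (hba : φ b = a) :
    (φ * swap a b) * (φ * swap a b) = φ * φ := by
  have hcomm : φ * swap a b = swap a b * φ := by
    have := swap_apply_apply φ a b
    rwa [hab, hba, swap_comm, eq_comm, mul_inv_eq_iff_eq_mul] at this
  rw [mul_assoc, ← mul_assoc (swap a b), ← hcomm, mul_assoc, swap_mul_self, mul_one]

lemma involution_apply_eq_iff_mul_swap (φ : Perm α) (a b : α) :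
    φ * φ = 1 ∧ φ a = b ↔
      (φ * swap a b) * (φ * swap a b) = 1 ∧ (φ * swap a b) a = a ∧ (φ * swap a b) b = b := by
  simp only [Perm.mul_apply, swap_apply_left, swap_apply_right]
  constructor
  · rintro ⟨h, rfl⟩
    have hba : φ (φ a) = a := by rw [← Perm.mul_apply, h, Perm.one_apply]
    exact ⟨by rw [mul_swap_mul_self_of_apply_eq rfl hba, h], hba, rfl⟩
  · rintro ⟨h, hba, hab⟩
    exact ⟨by rwa [← mul_swap_mul_self_of_apply_eq hab hba], hab⟩

variable [Fintype α]

lemma card_involutions_fixing (a : α) :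
    Nat.card {φ : Perm α // φ * φ = 1 ∧ φ a = a} = tInv (Fintype.card α - 1) := by
  calc Nat.card {φ : Perm α // φ * φ = 1 ∧ φ a = a}
      = Nat.card {φ : Perm α // (∀ x, ¬x ≠ a → φ x = x) ∧ φ * φ = 1} :=
        Nat.card_congr <| subtypeEquivRight fun φ => by simp [and_comm]
    _ = tInv (Fintype.card α - 1) := by
        rw [← Nat.card_congr (subtypeInvolutionsEquiv _), card_involutions_eq_tInv,
          Fintype.card_subtype_compl, Fintype.card_subtype_eq]

lemma card_involutions_apply_eq (a b : α) (hab : a ≠ b) :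
    Nat.card {φ : Perm α // φ * φ = 1 ∧ φ a = b} = tInv (Fintype.card α - 2) := by
  calc Nat.card {φ : Perm α // φ * φ = 1 ∧ φ a = b}
      = Nat.card {φ : Perm α // (∀ x, ¬x ∉ ({a, b} : Finset α) → φ x = x) ∧ φ * φ = 1} :=
        Nat.card_congr <| (Equiv.mulRight (swap a b)).subtypeEquiv fun φ => by
          rw [involution_apply_eq_iff_mul_swap, coe_mulRight]
          simp only [not_not, mem_insert, mem_singleton, forall_eq_or_imp, forall_eq]
          tauto
    _ = tInv (Fintype.card α - 2) := by
        rw [← Nat.card_congr (subtypeInvolutionsEquiv _), card_involutions_eq_tInv,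
          Fintype.card_subtype_compl, Fintype.card_coe, card_pair hab]

lemma tInv_card_eq (a : α) :
    tInv (Fintype.card α) =
      tInv (Fintype.card α - 1) + (Fintype.card α - 1) * tInv (Fintype.card α - 2) := by
  rw [← card_involutions_eq_tInv, card_involutions_eq_sum a, Fintype.sum_eq_add_sum_compl a,
    card_involutions_fixing,
    sum_congr rfl fun b hb =>
      card_involutions_apply_eq a b (Ne.symm (mem_compl.1 hb ∘ mem_singleton.2)),
    sum_const, card_compl, card_singleton, smul_eq_mul]

lemma sum_card_fixedPoints_involutions :
    ∑ φ ∈ univ.filter (fun φ : Perm α => φ * φ = 1), Nat.card {t : α // φ t = t} =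
      Fintype.card α * tInv (Fintype.card α - 1) := by
  calc ∑ φ ∈ univ.filter (fun φ : Perm α => φ * φ = 1), Nat.card {t : α // φ t = t}
      = ∑ φ ∈ univ.filter (fun φ : Perm α => φ * φ = 1),
          #((univ : Finset α).bipartiteAbove (fun φ t => φ t = t) φ) := by
        simp [Nat.card_eq_fintype_card, Fintype.card_subtype, bipartiteAbove]
    _ = ∑ t : α,
          #((univ.filter fun φ : Perm α => φ * φ = 1).bipartiteBelow (fun φ t => φ t = t) t) :=
        sum_card_bipartiteAbove_eq_sum_card_bipartiteBelow _
    _ = ∑ t : α, tInv (Fintype.card α - 1) := by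
        refine Fintype.sum_congr _ _ fun t => ?_
        rw [← card_involutions_fixing t, Nat.card_eq_fintype_card, Fintype.card_subtype,
          bipartiteBelow, filter_filter]
    _ = Fintype.card α * tInv (Fintype.card α - 1) := by
        rw [sum_const, card_univ, smul_eq_mul]

end Involutions

lemma tInv_succ_succ (n : ℕ) : tInv (n + 2) = tInv (n + 1) + (n + 1) * tInv n := by
  simpa using tInv_card_eq (0 : Fin (n + 2))

lemma tInv_one_eq_tInv_zero : tInv 1 = tInv 0 := by
  simpa using tInv_card_eq (0 : Fin 1)

lemma tInv_pos (n : ℕ) : 0 < tInv n :=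
  have : Nonempty {φ : Perm (Fin n) // φ * φ = 1} := ⟨⟨1, one_mul 1⟩⟩
  Nat.card_pos

lemma Real.sqrt_add_one_le_one_add_div {x r : ℝ} (hx : 0 ≤ x) (hr₀ : 0 < r) (hr : r ≤ √x + 1) :
    √(x + 1) ≤ 1 + x / r := by
  set s := √x
  have hs : 0 ≤ s := Real.sqrt_nonneg x
  have hx' : x = s ^ 2 := (Real.sq_sqrt hx).symm
  calc √(x + 1) ≤ 1 + x / (s + 1) := by
        rw [Real.sqrt_le_iff, hx']
        refine ⟨by positivity, ?_⟩
        rw [one_add_div (by positivity), div_pow, le_div_iff₀ (by positivity)]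
        nlinarith [sq_nonneg s]
    _ ≤ 1 + x / r := by gcongr

lemma Real.one_add_div_le_sqrt_add_one_add_one {x r : ℝ} (hx : 0 ≤ x) (hr : √x ≤ r) :
    1 + x / r ≤ √(x + 1) + 1 := by
  have hxr : x / r ≤ √x :=
    div_le_of_le_mul₀ ((Real.sqrt_nonneg x).trans hr) (Real.sqrt_nonneg x) <| by
      calc x = √x * √x := (Real.mul_self_sqrt hx).symm
        _ ≤ √x * r := by gcongr
  have hmono : √x ≤ √(x + 1) := Real.sqrt_le_sqrt (by linarith)
  linarith

lemma tInv_succ_succ_div (n : ℕ) :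
    (tInv (n + 2) : ℝ) / tInv (n + 1) = 1 + (n + 1) / ((tInv (n + 1) : ℝ) / tInv n) := by
  have h₀ : (tInv n : ℝ) ≠ 0 := by exact_mod_cast (tInv_pos n).ne'
  have h₁ : (tInv (n + 1) : ℝ) ≠ 0 := by exact_mod_cast (tInv_pos (n + 1)).ne'
  rw [tInv_succ_succ]
  field_simp
  push_cast
  ring

lemma tInv_succ_div_mem_Icc (n : ℕ) :
    (tInv (n + 1) : ℝ) / tInv n ∈ Set.Icc (√(n + 1)) (√(n + 1) + 1) := by
  induction n with
  | zero =>
    have h₀ : (tInv 0 : ℝ) ≠ 0 := by exact_mod_cast (tInv_pos 0).ne'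
    simp [tInv_one_eq_tInv_zero, h₀]
  | succ n ih =>
    have hr₀ : 0 < (tInv (n + 1) : ℝ) / tInv n := by
      have := tInv_pos n
      have := tInv_pos (n + 1)
      positivity
    have hx : (0 : ℝ) ≤ n + 1 := by positivity
    rw [tInv_succ_succ_div, Nat.cast_succ]
    exact ⟨Real.sqrt_add_one_le_one_add_div hx hr₀ ih.2,
      Real.one_add_div_le_sqrt_add_one_add_one hx ih.1⟩

lemma tendsto_tInv_succ_div_div_sqrt :
    Tendsto (fun n : ℕ => (tInv (n + 1) : ℝ) / tInv n / √(n + 1)) atTop (𝓝 1) := by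
  have hsqrt : Tendsto (fun n : ℕ => √((n : ℝ) + 1)) atTop atTop :=
    Real.tendsto_sqrt_atTop.comp (tendsto_atTop_add_const_right _ 1 tendsto_natCast_atTop_atTop)
  have hupper : Tendsto (fun n : ℕ => 1 + (√((n : ℝ) + 1))⁻¹) atTop (𝓝 1) := by
    simpa using (tendsto_inv_atTop_zero.comp hsqrt).const_add 1
  have hs (n : ℕ) : 0 < √((n : ℝ) + 1) := Real.sqrt_pos.2 (by positivity)
  refine tendsto_of_tendsto_of_tendsto_of_le_of_le tendsto_const_nhds hupper (fun n => ?_) fun n => ?_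
  · rw [le_div_iff₀ (hs n), one_mul]
    exact (tInv_succ_div_mem_Icc n).1
  · rw [div_le_iff₀ (hs n), add_mul, inv_mul_cancel₀ (hs n).ne', one_mul]
    exact (tInv_succ_div_mem_Icc n).2

/-- The total number of fixed points of all involutions of `[n]` equals
`n·t_{n−1}`; hence the average number of fixed points of a uniformly random involution of
`[n]` equals `n·t_{n−1}/t_n`, and this average is `(1+o(1))·√n` as `n → ∞`. -/
theorem involution_avg_fixed_points :
    (∀ n : ℕ,
      (∑ φ ∈ Finset.univ.filter (fun φ : Equiv.Perm (Fin n) => φ * φ = 1),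
          Nat.card {t : Fin n // φ t = t}) = n * tInv (n - 1)) ∧
    Tendsto (fun n : ℕ => ((n * tInv (n - 1) : ℕ) : ℝ) / (tInv n : ℝ) / Real.sqrt n)
      atTop (nhds 1) := by
  refine ⟨fun n => by simpa using sum_card_fixedPoints_involutions (α := Fin n), ?_⟩
  rw [← tendsto_add_atTop_iff_nat 1]
  have hinv := tendsto_tInv_succ_div_div_sqrt.inv₀ one_ne_zero
  rw [inv_one] at hinv
  refine hinv.congr fun n => ?_
  have hs : √((n : ℝ) + 1) ≠ 0 := (Real.sqrt_pos.2 (by positivity)).ne'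
  have h₀ : (tInv n : ℝ) ≠ 0 := by exact_mod_cast (tInv_pos n).ne'
  simp only [Nat.add_sub_cancel, Nat.cast_mul, Nat.cast_add_one]
  field_simp
  rw [Real.sq_sqrt (by positivity)]
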